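/- The generalized Fermat group acts faithfully on the generalized Fermat curve: for every tuple of integers (a_1, …, a_n) with not all a_i divisible by k, there exists a nonzero solution x = (x_0, …, x_n) of the generalized Fermat system of type (k,n) such that for no c ∈ ℂ does (x_0, ω^{a_1}·x_1, …, ω^{a_n}·x_n) = c·(x_0, x_1, …, x_n). (In particular, the curve has points with all coordinates nonzero, and H ≅ (ℤ/kℤ)^n embeds in the automorphism group of the curve.) -/
import Mathlib


noncomputable section

/-- A solution of the generalized Fermat system of type `(k,n)`:
`x₀^k + x₁^k + x₂^k = 0` and `λ_j·x₀^k + x₁^k + x_{j+2}^k = 0` for `j = 1, …, n-2`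
(here `lam` is 0-indexed, so `lam j` is `λ_{j+1}` and the last variable index is `j+3`). -/
def gfSol (k n : ℕ) (hn : 3 ≤ n) (lam : Fin (n - 2) → ℂ) (x : Fin (n + 1) → ℂ) : Prop :=
  x ⟨0, by omega⟩ ^ k + x ⟨1, by omega⟩ ^ k + x ⟨2, by omega⟩ ^ k = 0 ∧
    ∀ j : Fin (n - 2),
      lam j * x ⟨0, by omega⟩ ^ k + x ⟨1, by omega⟩ ^ k +
        x ⟨(j : ℕ) + 3, by have := j.2; omega⟩ ^ k = 0

theorem generalized_fermat_group_acts_faithfully (k n : ℕ) (hk : 2 ≤ k) (hn : 3 ≤ n)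
    (lam : Fin (n - 2) → ℂ) (hl0 : ∀ j, lam j ≠ 0) (hl1 : ∀ j, lam j ≠ 1)
    (hinj : Function.Injective lam)
    (a : Fin n → ℤ) (ha : ∃ i, ¬ (k : ℤ) ∣ a i) :
    ∃ x : Fin (n + 1) → ℂ, x ≠ 0 ∧ gfSol k n hn lam x ∧
      ∀ c : ℂ,
        (fun j : Fin (n + 1) =>
          if h : (j : ℕ) = 0 then x j
          else
            Complex.exp (2 * (Real.pi : ℂ) * Complex.I / (k : ℂ)) ^
                a ⟨(j : ℕ) - 1, by have := j.2; omega⟩ * x j) ≠ c • x := by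
  have hk0 : k ≠ 0 := by omega
  have hroot : ∀ z : ℂ, ∃ y : ℂ, y ^ k = z := fun z =>
    IsAlgClosed.exists_pow_nat_eq z (by omega)
  choose r hr using hroot
  have hrne : ∀ z : ℂ, z ≠ 0 → r z ≠ 0 := by
    intro z hz h
    apply hz
    rw [← hr z, h, zero_pow hk0]
  obtain ⟨t, ht⟩ := Infinite.exists_notMem_finset
    (insert (0 : ℂ) (insert (-1) (Finset.univ.image fun j => -lam j)))
  simp only [Finset.mem_insert, Finset.mem_image, Finset.mem_univ, true_and, not_or,
    not_exists] at ht
  obtain ⟨ht0, ht1, htl⟩ := ht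
  set x : Fin (n + 1) → ℂ := fun j =>
    if (j : ℕ) = 0 then 1
    else if (j : ℕ) = 1 then r t
    else if (j : ℕ) = 2 then r (-1 - t)
    else r (-(lam ⟨(j : ℕ) - 3, by have := j.2; omega⟩) - t) with hxdef
  have hxne : ∀ j, x j ≠ 0 := by
    intro j
    rw [hxdef]
    dsimp only
    split_ifs with h1 h2 h3
    · exact one_ne_zero
    · exact hrne t ht0
    · apply hrne
      intro h
      apply ht1
      linear_combination -h
    · apply hrne
      intro h
      apply htl ⟨(j : ℕ) - 3, by have := j.2; omega⟩
      linear_combination h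
  refine ⟨x, ?_, ?_, ?_⟩
  · intro h
    have := congrFun h ⟨0, by omega⟩
    rw [hxdef] at this
    simp at this
  · constructor
    · show x ⟨0, by omega⟩ ^ k + x ⟨1, by omega⟩ ^ k + x ⟨2, by omega⟩ ^ k = 0
      rw [hxdef]
      simp [hr]
    · intro j
      show lam j * x ⟨0, by omega⟩ ^ k + x ⟨1, by omega⟩ ^ k +
        x ⟨(j : ℕ) + 3, by have := j.2; omega⟩ ^ k = 0
      rw [hxdef]
      simp only
      norm_num [hr]
      rw [if_neg (by omega), if_neg (by omega)]
      ring
  · intro c hc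
    have h0 := congrFun hc ⟨0, by omega⟩
    simp only [Pi.smul_apply, smul_eq_mul] at h0
    rw [dif_pos trivial] at h0
    have hc1 : c = 1 := by
      have hx0 : x ⟨0, by omega⟩ ≠ 0 := hxne _
      exact mul_right_cancel₀ hx0 (by rw [← h0, one_mul])
    obtain ⟨i, hi⟩ := ha
    have h1 := congrFun hc ⟨(i : ℕ) + 1, by have := i.2; omega⟩
    simp only [Pi.smul_apply, smul_eq_mul, hc1, one_mul] at h1
    rw [dif_neg (by simp)] at h1
    have hxi : x ⟨(i : ℕ) + 1, by have := i.2; omega⟩ ≠ 0 := hxne _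
    have hω : Complex.exp (2 * (Real.pi : ℂ) * Complex.I / (k : ℂ)) ^
        a ⟨(i : ℕ) + 1 - 1, by have := i.2; omega⟩ = 1 :=
      mul_right_cancel₀ hxi (by rw [h1, one_mul])
    have heq : (⟨(i : ℕ) + 1 - 1, by have := i.2; omega⟩ : Fin n) = i := by
      ext; simp
    rw [heq] at hω
    have hprim := Complex.isPrimitiveRoot_exp k hk0
    exact hi ((hprim.zpow_eq_one_iff_dvd (a i)).mp hω)
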